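/- arXiv:1208.5582 — 2 statements merged into one kernel-verified Lean document; each statement's English description precedes it below -/
import Mathlib

section
/- For every real x with 0 < |x| < 1, the rescaled sinc function satisfies |S(x)| = |sin(2πx)/(2πx)| ≤ e^{−x² log(2π)}. -/
open Real

set_option maxHeartbeats 1000000 in
/-- For every real `x` with `0 < |x| < 1`, the rescaled sinc function satisfies
`|S(x)| = |sin(2πx)/(2πx)| ≤ e^{−x² log(2π)}`. -/
theorem sinc_le_exp_of_abs_lt_one (x : ℝ) (hx0 : 0 < |x|) (hx1 : |x| < 1) :
    |Real.sin (2 * π * x) / (2 * π * x)| ≤ Real.exp (-(x ^ 2) * Real.log (2 * π)) := by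
  have hpi1 : (3.141592 : ℝ) < π := Real.pi_gt_d6
  have hpi2 : π < 3.15 := Real.pi_lt_d2
  have hpisq : (9.8696 : ℝ) ≤ π ^ 2 := by nlinarith
  have hpisq' : π ^ 2 ≤ 9.9225 := by nlinarith
  set t := |x| with ht
  have ht0 : 0 < t := hx0
  have hL2 : Real.log (2 * π) ≤ 2 := by
    rw [Real.log_le_iff_le_exp (by positivity)]
    have h := Real.exp_one_gt_d9
    have h2 : Real.exp 2 = Real.exp 1 * Real.exp 1 := by
      rw [← Real.exp_add]; norm_num
    nlinarith
  have hL1 : (4 : ℝ) / 3 ≤ Real.log (2 * π) := by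
    have h4 : Real.log 4 ≤ Real.log (2 * π) := by
      apply Real.log_le_log (by norm_num); nlinarith
    have h4' : Real.log 4 = 2 * Real.log 2 := by
      rw [show (4:ℝ) = 2 ^ 2 by norm_num, Real.log_pow]; push_cast; ring
    have h2 := Real.log_two_gt_d9
    nlinarith
  have hsa : |Real.sin (2 * π * x)| = |Real.sin (2 * π * t)| := by
    rcases abs_cases x with ⟨h, _⟩ | ⟨h, _⟩
    · rw [ht, h]
    · rw [ht, h, show 2 * π * -x = -(2 * π * x) by ring, Real.sin_neg, abs_neg]
  have hLHS : |Real.sin (2 * π * x) / (2 * π * x)| = |Real.sin (2 * π * t)| / (2 * π * t) := by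
    rw [abs_div, hsa, abs_mul, abs_mul]
    rw [abs_of_pos Real.pi_pos, abs_of_pos (by norm_num : (0:ℝ) < 2), ← ht]
  have hRHS : Real.exp (-(x ^ 2) * Real.log (2 * π)) = Real.exp (-(t ^ 2) * Real.log (2 * π)) := by
    rw [ht, sq_abs]
  rw [hLHS, hRHS]
  set L := Real.log (2 * π) with hLdef
  have hden : 0 < 2 * π * t := by positivity
  rcases le_or_gt (1/2 : ℝ) t with hbig | hsmall
  · -- big case: |sin| ≤ 1
    have h1 : |Real.sin (2 * π * t)| / (2 * π * t) ≤ 1 / (2 * π * t) := by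
      gcongr
      exact Real.abs_sin_le_one _
    refine h1.trans ?_
    have hlt : 1 - 1 / t ≤ Real.log t := by
      have := Real.log_le_sub_one_of_pos (show (0:ℝ) < 1 / t by positivity)
      rw [Real.log_div one_ne_zero ht0.ne', Real.log_one] at this
      linarith
    have hinv : t * (1 / t) = 1 := by field_simp
    have key : 0 ≤ (1 - t) * (t * (1 + t) * L - 1) := by
      apply mul_nonneg (by linarith)
      nlinarith
    have h5 : t - 1 ≤ t * Real.log t := by
      nlinarith [mul_le_mul_of_nonneg_left hlt ht0.le]
    have h6 : t * (t ^ 2 * L) ≤ t * (L + Real.log t) := by nlinarith [key, h5]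
    have main : t ^ 2 * L ≤ L + Real.log t := le_of_mul_le_mul_left h6 ht0
    have hlog : Real.log (1 / (2 * π * t)) ≤ -(t ^ 2) * L := by
      rw [one_div, Real.log_inv, Real.log_mul (by positivity) ht0.ne', ← hLdef]
      linarith
    calc 1 / (2 * π * t) = Real.exp (Real.log (1 / (2 * π * t))) :=
          (Real.exp_log (by positivity)).symm
      _ ≤ Real.exp (-(t ^ 2) * L) := Real.exp_le_exp.mpr hlog
  · -- small case: t < 1/2
    set u := π * t / 2 with hu
    have hu0 : 0 < u := by positivity
    have hu1 : u ≤ 1 := by rw [hu]; nlinarith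
    have hu2 : u ^ 2 ≤ 1 := pow_le_one₀ hu0.le hu1
    have hsinpos : 0 ≤ Real.sin (2 * π * t) :=
      Real.sin_nonneg_of_nonneg_of_le_pi (by positivity) (by nlinarith)
    rw [abs_of_nonneg hsinpos, div_le_iff₀ hden]
    have hsin2 : Real.sin (2 * π * t) = 2 * Real.sin (π * t) * Real.cos (π * t) := by
      rw [show 2 * π * t = 2 * (π * t) by ring, Real.sin_two_mul]
    have hc0 : 0 ≤ Real.cos (π * t) :=
      Real.cos_nonneg_of_mem_Icc (Set.mem_Icc.mpr ⟨by nlinarith, by nlinarith⟩)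
    have hs1 : Real.sin (π * t) ≤ π * t := Real.sin_le (by positivity)
    have step1 : Real.sin (2 * π * t) ≤ 2 * π * t * Real.cos (π * t) := by
      rw [hsin2]; nlinarith
    have hcos_eq : Real.cos (π * t) = 1 - 2 * Real.sin u ^ 2 := by
      rw [show π * t = 2 * u by rw [hu]; ring, Real.cos_two_mul']
      have := Real.sin_sq_add_cos_sq u
      linarith
    have hsu : u - u ^ 3 / 4 ≤ Real.sin u := by
      have := Real.sin_gt_sub_cube hu0
      nlinarith [pow_pos hu0 3]
    have hcube : 0 ≤ u - u ^ 3 / 4 := by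
      nlinarith [mul_le_mul_of_nonneg_left hu2 hu0.le]
    have hsq : (u - u ^ 3 / 4) ^ 2 ≤ Real.sin u ^ 2 := pow_le_pow_left₀ hcube hsu 2
    have step2 : Real.cos (π * t) ≤ 1 - 2 * (u - u ^ 3 / 4) ^ 2 := by
      rw [hcos_eq]; linarith
    -- quantitative bounds on u
    have ht2 : t ^ 2 ≤ 1 / 4 := by nlinarith
    have hA : (2.4674 : ℝ) * t ^ 2 ≤ u ^ 2 := by
      rw [hu]
      nlinarith [mul_le_mul_of_nonneg_right hpisq (sq_nonneg t)]
    have hB : u ^ 2 ≤ 0.62016 := by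
      rw [hu]
      nlinarith [mul_le_mul hpisq' ht2 (sq_nonneg t) (by norm_num : (0:ℝ) ≤ 9.9225)]
    have hC : (0.7139 : ℝ) ≤ (1 - u ^ 2 / 4) ^ 2 := by nlinarith
    have step3 : 1 - 2 * (u - u ^ 3 / 4) ^ 2 ≤ 1 - t ^ 2 * L := by
      have hprod : (2.4674 : ℝ) * t ^ 2 * 0.7139 ≤ u ^ 2 * (1 - u ^ 2 / 4) ^ 2 :=
        mul_le_mul hA hC (by norm_num) (sq_nonneg u)
      nlinarith [hprod, hL2, sq_nonneg t]
    have step4 : 1 - t ^ 2 * L ≤ Real.exp (-(t ^ 2) * L) := by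
      have := Real.add_one_le_exp (-(t ^ 2) * L)
      linarith
    calc Real.sin (2 * π * t) ≤ 2 * π * t * Real.cos (π * t) := step1
      _ ≤ 2 * π * t * (1 - 2 * (u - u ^ 3 / 4) ^ 2) :=
          mul_le_mul_of_nonneg_left step2 hden.le
      _ ≤ 2 * π * t * (1 - t ^ 2 * L) := mul_le_mul_of_nonneg_left step3 hden.le
      _ = (1 - t ^ 2 * L) * (2 * π * t) := by ring
      _ ≤ Real.exp (-(t ^ 2) * L) * (2 * π * t) :=
          mul_le_mul_of_nonneg_right step4 hden.le
end

section
/- Let α ∈ ℝ and 0 < ε < 1, and let φ, ψ : 𝕊¹ → ℂ be bounded measurable functions whose Fourier coefficients satisfy |φ̂(k)| ≤ 1/|k| and |ψ̂(k)| ≤ 1/|k| for all nonzero integers k, and such that the correlation identity C_{j,ε}(φ,ψ) = |∑_{k ≠ 0} ψ̂(k) φ̂(−k) e^{2πikjα} S(kε)^j| holds. Then for every integer j ≥ 1, C_{j,ε}(φ,ψ) ≤ 2(2 − ε) e^{−ε² j log(2π)} + 4ε e^{−j log(2π)}. -/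
open Real MeasureTheory AddCircle

/-- The randomly averaged correlation `C_{j,ε}(φ,ψ)` of observables on `𝕊¹ = ℝ/ℤ` for the
rotation by `α` perturbed by additive uniform noise of amplitude `ε`:
`C_{j,ε}(φ,ψ) = |∫_{𝕊¹} (1/2^j) ∫_{[-1,1]^j} ψ(x + jα + ε(ξ₁+⋯+ξ_j)) φ(x) dξ dLeb(x)
  − ∫ψ dLeb · ∫φ dLeb|`. -/
noncomputable def randCorr (α ε : ℝ) (j : ℕ) (φ ψ : AddCircle (1 : ℝ) → ℂ) : ℝ :=
  ‖(∫ x : AddCircle (1 : ℝ),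
        (1 / 2 ^ j : ℂ) *
          (∫ ξ in Set.univ.pi (fun _ : Fin j => Set.Icc (-1 : ℝ) 1),
            ψ (x + (((j : ℝ) * α + ε * ∑ i, ξ i : ℝ) : AddCircle (1 : ℝ))) * φ x)
      ∂haarAddCircle) -
    (∫ x : AddCircle (1 : ℝ), ψ x ∂haarAddCircle) *
      (∫ x : AddCircle (1 : ℝ), φ x ∂haarAddCircle)‖

/-- The Fourier series `∑_{k ≠ 0} ψ̂(k) φ̂(−k) e^{2πikjα} S(kε)^j`, with
`S(x) = sin(2πx)/(2πx)`. -/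
noncomputable def fourierCorrSeries (α ε : ℝ) (j : ℕ) (φ ψ : AddCircle (1 : ℝ) → ℂ) : ℂ :=
  ∑' k : {k : ℤ // k ≠ 0},
    fourierCoeff ψ (k : ℤ) * fourierCoeff φ (-(k : ℤ)) *
      Complex.exp (2 * (π : ℂ) * Complex.I * ((k : ℤ) : ℂ) * (j : ℂ) * (α : ℂ)) *
      (((Real.sin (2 * π * (((k : ℤ) : ℝ) * ε)) /
          (2 * π * (((k : ℤ) : ℝ) * ε))) : ℝ) : ℂ) ^ j



lemma log_two_pi_le : Real.log (2*π) ≤ 2 := by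
  have hπ : π < 3.15 := by have := Real.pi_lt_d2; linarith
  have hπ0 := Real.pi_pos
  rw [Real.log_le_iff_le_exp (by linarith)]
  have he : (2.7182818283 : ℝ) < Real.exp 1 := Real.exp_one_gt_d9
  have : Real.exp 2 = Real.exp 1 * Real.exp 1 := by
    rw [← Real.exp_add]; norm_num
  nlinarith

lemma log_two_pi_ge : (4:ℝ)/3 ≤ Real.log (2*π) := by
  have h2 : (0.6931471803 : ℝ) < Real.log 2 := Real.log_two_gt_d9
  have h4 : Real.log 4 = 2 * Real.log 2 := by
    rw [show (4:ℝ) = 2^2 by norm_num, Real.log_pow]; push_cast; ring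
  have hπ : (3.14 : ℝ) < π := by have := Real.pi_gt_d6; linarith
  have : Real.log 4 ≤ Real.log (2*π) := by
    apply Real.log_le_log (by norm_num); linarith
  linarith

lemma S_bound_main {ε x : ℝ} (hε0 : 0 < ε) (hε1 : ε < 1) (hx : ε ≤ x) :
    |Real.sin (2*π*x) / (2*π*x)| ≤ Real.exp (-(ε^2) * Real.log (2*π)) := by
  have hπ := Real.pi_pos
  have hLle := log_two_pi_le
  have hLge := log_two_pi_ge
  have hx0 : 0 < x := lt_of_lt_of_le hε0 hx
  set L := Real.log (2*π) with hL
  have hmono : Real.exp (-(x^2) * L) ≤ Real.exp (-(ε^2) * L) := by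
    apply Real.exp_le_exp.2
    nlinarith [mul_le_mul_of_nonneg_right (show ε^2 ≤ x^2 by nlinarith)
      (by linarith : (0:ℝ) ≤ L)]
  rcases le_or_gt x (1/2) with h2 | h2
  · have hsin2 : Real.sin (2*π*x) = 2 * Real.sin (π*x) * Real.cos (π*x) := by
      rw [show 2*π*x = 2*(π*x) by ring, Real.sin_two_mul]
    have hπx : 0 < π*x := by positivity
    have hπx2 : π*x ≤ π/2 := by nlinarith
    have hcos0 : 0 ≤ Real.cos (π*x) :=
      Real.cos_nonneg_of_mem_Icc ⟨by linarith, hπx2⟩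
    have hsl : Real.sin (π*x) ≤ π*x := (Real.sin_lt hπx).le
    have hsnn : 0 ≤ Real.sin (2*π*x) := by
      apply Real.sin_nonneg_of_nonneg_of_le_pi (by positivity)
      nlinarith
    have h1 : Real.sin (2*π*x) / (2*π*x) ≤ Real.cos (π*x) := by
      rw [div_le_iff₀ (by positivity), hsin2]
      nlinarith
    have h2' : Real.cos (π*x) ≤ 1 - 2*x^2 := by
      have := Real.cos_le_one_sub_mul_cos_sq (x := π*x)
        (by rw [abs_of_pos hπx]; nlinarith)
      calc Real.cos (π*x) ≤ 1 - 2/π^2 * (π*x)^2 := this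
        _ = 1 - 2*x^2 := by field_simp
    have h3 : 1 - 2*x^2 ≤ Real.exp (-(x^2)*L) := by
      have := Real.add_one_le_exp (-(x^2)*L)
      nlinarith
    have habs : |Real.sin (2*π*x) / (2*π*x)| = Real.sin (2*π*x) / (2*π*x) := by
      rw [abs_of_nonneg]; positivity
    rw [habs]
    exact le_trans (le_trans h1 (le_trans h2' h3)) hmono
  · have hb : |Real.sin (2*π*x) / (2*π*x)| ≤ 1/(2*π*x) := by
      rw [abs_div, abs_of_pos (by positivity : (0:ℝ) < 2*π*x)]
      apply div_le_div_of_nonneg_right ?_ (by positivity)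
      exact Real.abs_sin_le_one _
    rcases le_or_gt x 1 with h3 | h3
    · refine hb.trans (le_trans ?_ hmono)
      rw [show (1:ℝ)/(2*π*x) = (2*π*x)⁻¹ by ring, ← Real.exp_log
        (show (0:ℝ) < (2*π*x)⁻¹ by positivity)]
      apply Real.exp_le_exp.2
      rw [Real.log_inv, Real.log_mul (by positivity) (by positivity)]
      have hlx : 1 - 1/x ≤ Real.log x := by
        have := Real.log_le_sub_one_of_pos (show (0:ℝ) < x⁻¹ by positivity)
        rw [Real.log_inv] at this
        have hx' : x⁻¹ = 1/x := by ring
        linarith [this, hx'.symm ▸ this]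
      have key : (x^2-1)*L ≤ 1 - 1/x := by
        rw [← sub_nonneg]
        have : 1 - 1/x - (x^2-1)*L = (1-x)*(x*(x+1)*L - 1)/x := by
          field_simp; ring
        rw [this]
        apply div_nonneg _ hx0.le
        apply mul_nonneg (by linarith)
        nlinarith
      linarith
    · have hstep : -L ≤ -(ε^2)*L := by
        nlinarith [mul_nonneg (show (0:ℝ) ≤ 1-ε^2 by nlinarith)
          (show (0:ℝ) ≤ L by linarith)]
      refine hb.trans (le_trans ?_ (Real.exp_le_exp.2 hstep))
      rw [← Real.log_inv, Real.exp_log (by positivity)]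
      rw [div_le_iff₀ (by positivity), inv_mul_eq_div, le_div_iff₀ (by positivity)]
      nlinarith

lemma S_bound_tail {x : ℝ} (hx : 1 ≤ x) :
    |Real.sin (2*π*x) / (2*π*x)| ≤ Real.exp (-Real.log (2*π)) := by
  have hπ := Real.pi_pos
  have hx0 : 0 < x := by linarith
  have hb : |Real.sin (2*π*x) / (2*π*x)| ≤ 1/(2*π*x) := by
    rw [abs_div, abs_of_pos (by positivity : (0:ℝ) < 2*π*x)]
    exact div_le_div_of_nonneg_right (Real.abs_sin_le_one _) (by positivity)
  refine hb.trans ?_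
  rw [← Real.log_inv, Real.exp_log (by positivity)]
  rw [div_le_iff₀ (by positivity), inv_mul_eq_div, le_div_iff₀ (by positivity)]
  nlinarith

lemma abs_S_abs (x : ℝ) :
    |Real.sin (2*π*x) / (2*π*x)| = |Real.sin (2*π*|x|) / (2*π*|x|)| := by
  rcases abs_cases x with ⟨h, _⟩ | ⟨h, _⟩
  · rw [h]
  · rw [h, show 2*π*(-x) = -(2*π*x) by ring, Real.sin_neg, neg_div_neg_eq]

lemma sum_head (K : ℕ) (hK : 1 ≤ K) :
    ∑ n ∈ Finset.range K, (1:ℝ)/((n:ℝ)+1)^2 ≤ 2 - 1/(K:ℝ) := by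
  induction K with
  | zero => omega
  | succ K ih =>
    rcases Nat.eq_or_lt_of_le hK with h | h
    · simp [← h]; norm_num
    · have hK1 : 1 ≤ K := by omega
      have hKR : (1:ℝ) ≤ (K:ℝ) := by exact_mod_cast hK1
      rw [Finset.sum_range_succ]
      have := ih hK1
      have key : (1:ℝ)/((K:ℝ)+1)^2 ≤ 1/(K:ℝ) - 1/((K:ℝ)+1) := by
        rw [div_sub_div _ _ (by positivity) (by positivity),
          div_le_div_iff₀ (by positivity) (by positivity)]
        ring_nf; nlinarith
      push_cast
      linarith

lemma sum_tail (K : ℕ) (hK : 1 ≤ K) :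
    ∑' n : ℕ, (1:ℝ)/((n:ℝ)+(K:ℝ)+1)^2 ≤ 1/(K:ℝ) := by
  have hKR : (1:ℝ) ≤ (K:ℝ) := by exact_mod_cast hK
  apply Real.tsum_le_of_sum_range_le (fun n => by positivity)
  intro n
  have step : ∀ i : ℕ, (1:ℝ)/((i:ℝ)+(K:ℝ)+1)^2 ≤
      1/((i:ℝ)+(K:ℝ)) - 1/(((i:ℝ)+1)+(K:ℝ)) := by
    intro i
    have h1 : (0:ℝ) < (i:ℝ)+(K:ℝ) := by positivity
    rw [div_sub_div _ _ (by positivity) (by positivity)]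
    rw [div_le_div_iff₀ (by positivity) (by positivity)]
    ring_nf
    nlinarith
  calc ∑ i ∈ Finset.range n, (1:ℝ)/((i:ℝ)+(K:ℝ)+1)^2
      ≤ ∑ i ∈ Finset.range n, ((1:ℝ)/((i:ℝ)+(K:ℝ)) - 1/(((i:ℝ)+1)+(K:ℝ))) :=
        Finset.sum_le_sum (fun i _ => step i)
    _ = 1/((0:ℝ)+(K:ℝ)) - 1/((n:ℝ)+(K:ℝ)) := by
        have tele := Finset.sum_range_sub' (fun i : ℕ => (1:ℝ)/((i:ℝ)+(K:ℝ))) n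
        push_cast at tele
        exact tele
    _ ≤ 1/(K:ℝ) := by
        have : (0:ℝ) ≤ 1/((n:ℝ)+(K:ℝ)) := by positivity
        simp only [zero_add]; linarith

set_option maxHeartbeats 1000000 in
/-- Let `α ∈ ℝ`, `0 < ε < 1`, and let `φ, ψ : 𝕊¹ → ℂ` be bounded measurable
functions whose Fourier coefficients satisfy `|φ̂(k)| ≤ 1/|k|`, `|ψ̂(k)| ≤ 1/|k|` for all
`k ≠ 0`, such that the correlation identity `C_{j,ε}(φ,ψ) = |∑_{k≠0} ψ̂(k)φ̂(−k)e^{2πikjα}S(kε)^j|`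
holds. Then for every integer `j ≥ 1`,
`C_{j,ε}(φ,ψ) ≤ 2(2 − ε) e^{−ε² j log(2π)} + 4ε e^{−j log(2π)}`. -/
theorem randCorr_le (α ε : ℝ) (hε : ε ∈ Set.Ioo (0 : ℝ) 1)
    (φ ψ : AddCircle (1 : ℝ) → ℂ) (hφm : Measurable φ) (hψm : Measurable ψ)
    (hφb : ∃ M : ℝ, ∀ x, ‖φ x‖ ≤ M) (hψb : ∃ M : ℝ, ∀ x, ‖ψ x‖ ≤ M)
    (hφ : ∀ k : ℤ, k ≠ 0 → ‖fourierCoeff φ k‖ ≤ 1 / |(k : ℝ)|)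
    (hψ : ∀ k : ℤ, k ≠ 0 → ‖fourierCoeff ψ k‖ ≤ 1 / |(k : ℝ)|)
    (hident : ∀ j : ℕ, 1 ≤ j → randCorr α ε j φ ψ = ‖fourierCorrSeries α ε j φ ψ‖)
    (j : ℕ) (hj : 1 ≤ j) :
    randCorr α ε j φ ψ ≤
      2 * (2 - ε) * Real.exp (-(ε ^ 2) * (j : ℝ) * Real.log (2 * π)) +
        4 * ε * Real.exp (-(j : ℝ) * Real.log (2 * π)) := by
  obtain ⟨hε0, hε1⟩ := hε
  have hπ := Real.pi_pos
  have hL0 : 0 < Real.log (2*π) := by linarith [log_two_pi_ge]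
  set L := Real.log (2*π) with hLdef
  set A : ℝ := Real.exp (-(ε^2) * L) with hA
  set B : ℝ := Real.exp (-L) with hB
  have hA0 : 0 < A := Real.exp_pos _
  have hB0 : 0 < B := Real.exp_pos _
  have hA1 : A ≤ 1 := Real.exp_le_one_iff.2 (by nlinarith)
  have hB1 : B ≤ 1 := Real.exp_le_one_iff.2 (by nlinarith)
  -- the cutoff
  set K : ℕ := ⌊1/ε⌋₊ with hKdef
  have hK1 : 1 ≤ K := Nat.le_floor (by rw [le_div_iff₀ hε0]; norm_num; linarith)
  have hKR : (1:ℝ) ≤ (K:ℝ) := by exact_mod_cast hK1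
  have hKε : (K:ℝ) * ε ≤ 1 := by
    have := Nat.floor_le (show (0:ℝ) ≤ 1/ε by positivity)
    rw [← hKdef] at this
    calc (K:ℝ)*ε ≤ (1/ε)*ε := by nlinarith
      _ = 1 := by field_simp
  have hKε2 : 1 ≤ ((K:ℝ)+1) * ε := by
    have := Nat.lt_floor_add_one (1/ε)
    rw [← hKdef] at this
    have h2 : 1/ε < (K:ℝ)+1 := by exact_mod_cast this
    have h3 : (1/ε)*ε = 1 := by field_simp
    nlinarith [mul_lt_mul_of_pos_right h2 hε0]
  have hεK : ε ≤ 1/(K:ℝ) := by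
    rw [le_div_iff₀ (by linarith)]; linarith [hKε]
  have hKε3 : 1/(K:ℝ) ≤ 2*ε := by
    rw [div_le_iff₀ (by linarith)]
    nlinarith
  -- majorant on ℤ
  set m : ℤ → ℝ := fun k =>
    if k = 0 then 0 else (1/((k:ℝ))^2) * (if |k| ≤ (K:ℤ) then A^j else B^j) with hm
  have hm_nonneg : ∀ k, 0 ≤ m k := by
    intro k
    simp only [hm]
    split
    · exact le_rfl
    · positivity
  have hmle : ∀ k : ℤ, m k ≤ 1/((k:ℝ))^2 := by
    intro k
    simp only [hm]
    split
    · positivity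
    · apply mul_le_of_le_one_right (by positivity)
      split
      · exact pow_le_one₀ hA0.le hA1
      · exact pow_le_one₀ hB0.le hB1
  have hmsum : Summable m :=
    Summable.of_nonneg_of_le hm_nonneg hmle
      ((Real.summable_one_div_int_pow (p := 2)).2 one_lt_two)
  -- termwise bound
  have hbound : ∀ k : {k : ℤ // k ≠ 0},
      ‖fourierCoeff ψ (k : ℤ) * fourierCoeff φ (-(k : ℤ)) *
        Complex.exp (2 * (π : ℂ) * Complex.I * ((k : ℤ) : ℂ) * (j : ℂ) * (α : ℂ)) *
        (((Real.sin (2 * π * (((k : ℤ) : ℝ) * ε)) /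
            (2 * π * (((k : ℤ) : ℝ) * ε))) : ℝ) : ℂ) ^ j‖ ≤ m (k : ℤ) := by
    rintro ⟨k, hk⟩
    simp only
    have hk1 : (1:ℝ) ≤ |(k:ℝ)| := by
      rw [← Int.cast_abs]; exact_mod_cast Int.one_le_abs hk
    rw [norm_mul, norm_mul, norm_mul, norm_pow]
    have hexp : ‖Complex.exp (2 * (π : ℂ) * Complex.I * ((k:ℤ) : ℂ) * (j : ℂ) * (α : ℂ))‖
        = 1 := by
      rw [show 2 * (π : ℂ) * Complex.I * ((k:ℤ) : ℂ) * (j : ℂ) * (α : ℂ)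
          = ((2*π*(k:ℝ)*(j:ℝ)*α : ℝ) : ℂ) * Complex.I by push_cast; ring]
      rw [Complex.norm_exp_ofReal_mul_I]
    have hSnorm : ‖(((Real.sin (2 * π * ((k:ℝ) * ε)) / (2 * π * ((k:ℝ) * ε))) : ℝ) : ℂ)‖
        = |Real.sin (2 * π * ((k:ℝ) * ε)) / (2 * π * ((k:ℝ) * ε))| := by
      rw [Complex.norm_real, Real.norm_eq_abs]
    have habs : |(k:ℝ)*ε| = |(k:ℝ)| * ε := by rw [abs_mul, abs_of_pos hε0]
    have hSb : |Real.sin (2 * π * ((k:ℝ) * ε)) / (2 * π * ((k:ℝ) * ε))|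
        ≤ (if |k| ≤ (K:ℤ) then A else B) := by
      rw [abs_S_abs, habs]
      split
      · exact S_bound_main hε0 hε1 (by nlinarith)
      · rename_i hcond
        apply S_bound_tail
        have h1 : (K:ℤ)+1 ≤ |k| := by omega
        have h2 : ((K:ℝ))+1 ≤ |(k:ℝ)| := by
          rw [← Int.cast_abs]; exact_mod_cast h1
        nlinarith
    have h1 := hψ k hk
    have h2 : ‖fourierCoeff φ (-k)‖ ≤ 1/|(k:ℝ)| := by
      have := hφ (-k) (neg_ne_zero.2 hk)
      rwa [Int.cast_neg, abs_neg] at this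
    have h3 : ‖(((Real.sin (2 * π * ((k:ℝ) * ε)) / (2 * π * ((k:ℝ) * ε))) : ℝ) : ℂ)‖ ^ j
        ≤ (if |k| ≤ (K:ℤ) then A else B) ^ j := by
      rw [hSnorm]
      exact pow_le_pow_left₀ (abs_nonneg _) hSb j
    have hite : (0:ℝ) ≤ (if |k| ≤ (K:ℤ) then A else B) := by
      split
      · exact hA0.le
      · exact hB0.le
    calc ‖fourierCoeff ψ k‖ * ‖fourierCoeff φ (-k)‖ *
          ‖Complex.exp (2 * (π : ℂ) * Complex.I * ((k:ℤ) : ℂ) * (j : ℂ) * (α : ℂ))‖ *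
          ‖(((Real.sin (2 * π * ((k:ℝ) * ε)) / (2 * π * ((k:ℝ) * ε))) : ℝ) : ℂ)‖ ^ j
        ≤ (1/|(k:ℝ)|) * (1/|(k:ℝ)|) * 1 * (if |k| ≤ (K:ℤ) then A else B) ^ j := by
          rw [hexp]
          apply mul_le_mul _ h3 (by positivity) (by positivity)
          rw [mul_one, mul_one]
          apply mul_le_mul h1 h2 (norm_nonneg _) (by positivity)
      _ = m k := by
          simp only [hm]
          rw [if_neg hk, apply_ite (· ^ j)]
          have : (1:ℝ)/|(k:ℝ)| * (1/|(k:ℝ)|) * 1 = 1/((k:ℝ))^2 := by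
            rw [mul_one, div_mul_div_comm, one_mul, ← abs_mul, abs_mul_self, sq]
          rw [this]
    -- end calc
  have hmsub : Summable (fun k : {k : ℤ // k ≠ 0} => m (k : ℤ)) := hmsum.subtype _
  have hTsum : Summable (fun k : {k : ℤ // k ≠ 0} =>
      ‖fourierCoeff ψ (k : ℤ) * fourierCoeff φ (-(k : ℤ)) *
        Complex.exp (2 * (π : ℂ) * Complex.I * ((k : ℤ) : ℂ) * (j : ℂ) * (α : ℂ)) *
        (((Real.sin (2 * π * (((k : ℤ) : ℝ) * ε)) /
            (2 * π * (((k : ℤ) : ℝ) * ε))) : ℝ) : ℂ) ^ j‖) :=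
    Summable.of_nonneg_of_le (fun _ => norm_nonneg _) hbound hmsub
  -- nat-indexed majorant
  set h : ℕ → ℝ := fun n =>
    (1/((n:ℝ)+1)^2) * (if n+1 ≤ K then A^j else B^j) with hhdef
  have hmnat : ∀ n : ℕ, m ((n:ℤ)+1) = h n := by
    intro n
    simp only [hm, hhdef]
    rw [if_neg (by omega), abs_of_nonneg (by omega : (0:ℤ) ≤ (n:ℤ)+1)]
    congr 1
    · push_cast; ring
    · exact if_congr (by omega) rfl rfl
  have hmneg : ∀ n : ℕ, m (-((n:ℤ)+1)) = h n := by
    intro n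
    simp only [hm, hhdef]
    rw [if_neg (by omega), abs_neg, abs_of_nonneg (by omega : (0:ℤ) ≤ (n:ℤ)+1)]
    congr 1
    · push_cast; ring
    · exact if_congr (by omega) rfl rfl
  have hnat : Summable (fun n : ℕ => m n) := hmsum.comp_injective Nat.cast_injective
  have hginj : Function.Injective (fun n : ℕ => -((n:ℤ)+1)) := by
    intro a b hab
    simp only [neg_inj, add_left_inj, Nat.cast_inj] at hab
    exact hab
  have hneg : Summable (fun n : ℕ => m (-((n:ℤ)+1))) :=
    hmsum.comp_injective hginj
  have hh : Summable h := by
    have h1 := (summable_nat_add_iff 1).2 hnat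
    exact h1.congr (fun n => by
      rw [show (((n+1:ℕ)):ℤ) = (n:ℤ)+1 by push_cast; ring]
      exact hmnat n)
  -- the three tsum identities
  have split1 : ∑' k : ℤ, m k = (∑' n : ℕ, m n) + ∑' n : ℕ, m (-((n:ℤ)+1)) :=
    tsum_of_nat_of_neg_add_one hnat hneg
  have split2 : ∑' n : ℕ, m n = ∑' n : ℕ, h n := by
    rw [Summable.tsum_eq_zero_add hnat]
    have hm0 : m ((0:ℕ):ℤ) = 0 := by simp [hm]
    rw [hm0, zero_add]
    exact tsum_congr (fun n => by
      rw [show (((n+1:ℕ)):ℤ) = (n:ℤ)+1 by push_cast; ring]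
      exact hmnat n)
  have split3 : ∑' n : ℕ, m (-((n:ℤ)+1)) = ∑' n : ℕ, h n :=
    tsum_congr (fun n => hmneg n)
  -- bound on ∑' h
  have hhead : ∑ n ∈ Finset.range K, h n ≤ (2 - 1/(K:ℝ)) * A^j := by
    have he : ∑ n ∈ Finset.range K, h n
        = (∑ n ∈ Finset.range K, (1:ℝ)/((n:ℝ)+1)^2) * A^j := by
      rw [Finset.sum_mul]
      apply Finset.sum_congr rfl
      intro n hn
      rw [Finset.mem_range] at hn
      simp only [hhdef]
      rw [if_pos (by omega)]
    rw [he]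
    exact mul_le_mul_of_nonneg_right (sum_head K hK1) (by positivity)
  have htail : ∑' n : ℕ, h (n + K) ≤ (1/(K:ℝ)) * B^j := by
    have he : ∑' n : ℕ, h (n + K)
        = (∑' n : ℕ, (1:ℝ)/((n:ℝ)+(K:ℝ)+1)^2) * B^j := by
      rw [← tsum_mul_right]
      apply tsum_congr
      intro n
      simp only [hhdef]
      rw [if_neg (by omega)]
      congr 2
      push_cast
      ring
    rw [he]
    exact mul_le_mul_of_nonneg_right (sum_tail K hK1) (by positivity)
  have hsumh : ∑' n : ℕ, h n ≤ (2 - 1/(K:ℝ)) * A^j + (1/(K:ℝ)) * B^j := by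
    rw [← Summable.sum_add_tsum_nat_add K hh]
    exact add_le_add hhead htail
  -- put everything together
  have hAj : A^j = Real.exp (-(ε^2) * (j:ℝ) * L) := by
    rw [hA, ← Real.exp_nat_mul]
    congr 1
    ring
  have hBj : B^j = Real.exp (-(j:ℝ) * L) := by
    rw [hB, ← Real.exp_nat_mul]
    congr 1
    ring
  have hAj0 : (0:ℝ) ≤ A^j := by positivity
  have hBj0 : (0:ℝ) ≤ B^j := by positivity
  rw [hident j hj]
  calc ‖fourierCorrSeries α ε j φ ψ‖
      ≤ ∑' k : {k : ℤ // k ≠ 0},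
          ‖fourierCoeff ψ (k : ℤ) * fourierCoeff φ (-(k : ℤ)) *
            Complex.exp (2 * (π : ℂ) * Complex.I * ((k : ℤ) : ℂ) * (j : ℂ) * (α : ℂ)) *
            (((Real.sin (2 * π * (((k : ℤ) : ℝ) * ε)) /
                (2 * π * (((k : ℤ) : ℝ) * ε))) : ℝ) : ℂ) ^ j‖ := by
        rw [fourierCorrSeries]
        exact norm_tsum_le_tsum_norm hTsum
    _ ≤ ∑' k : {k : ℤ // k ≠ 0}, m (k : ℤ) := Summable.tsum_le_tsum hbound hTsum hmsub
    _ = ∑' k : ℤ, m k := by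
        apply tsum_subtype_eq_of_support_subset
        intro k hk
        simp only [Function.mem_support, hm] at hk
        intro h0
        exact hk (by rw [if_pos h0])
    _ = (∑' n : ℕ, h n) + (∑' n : ℕ, h n) := by rw [split1, split2, split3]
    _ ≤ ((2 - 1/(K:ℝ)) * A^j + (1/(K:ℝ)) * B^j)
        + ((2 - 1/(K:ℝ)) * A^j + (1/(K:ℝ)) * B^j) := add_le_add hsumh hsumh
    _ ≤ 2 * (2 - ε) * Real.exp (-(ε ^ 2) * (j : ℝ) * L) +
        4 * ε * Real.exp (-(j : ℝ) * L) := by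
        rw [← hAj, ← hBj]
        nlinarith [mul_le_mul_of_nonneg_right
            (show (2:ℝ) - 1/(K:ℝ) ≤ 2 - ε by linarith) hAj0,
          mul_le_mul_of_nonneg_right hKε3 hBj0]
end
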